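/- arXiv:1809.02941 — 4 statements merged into one kernel-verified Lean document; each statement's English description precedes it below -/
import Mathlib

section
/- Higman's Lemma: If (Q,≤) is a well quasiorder, then the set Q* of finite sequences over Q, ordered by the embeddability relation ≤*, is a well quasiorder, where (x₁,…,x_m) ≤* (y₁,…,y_n) iff there is a strictly increasing function φ: {1,…,m} → {1,…,n} with xᵢ ≤ y_{φ(i)} for all i. -/
/-!
The combinatorial heart, Nash-Williams' minimal bad sequence argument, is Mathlib's
`Set.PartiallyWellOrderedOn.partiallyWellOrderedOn_sublistForall₂`. What remains is to see that
`List.SublistForall₂ r u v` (`u` is pointwise `r`-below a sublist of `v`) yields an embedding by a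
strictly increasing index map, and that a wqo is automatically reflexive (apply it to a constant
sequence).
-/

/-- The embeddability relation on finite sequences over a quasiorder. -/
def ListEmb {Q : Type*} (le : Q → Q → Prop) (u v : List Q) : Prop :=
  ∃ φ : Fin u.length → Fin v.length, StrictMono φ ∧ ∀ i, le (u.get i) (v.get (φ i))

theorem ListEmb.of_sublistForall₂ {Q : Type*} {le : Q → Q → Prop} {u v : List Q}
    (h : List.SublistForall₂ le u v) : ListEmb le u v := by
  obtain ⟨w, hforall, hsub⟩ := List.sublistForall₂_iff.mp h
  obtain ⟨hlen, hget⟩ := List.forall₂_iff_get.mp hforall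
  obtain ⟨e, he⟩ := List.sublist_iff_exists_fin_orderEmbedding_get_eq.mp hsub
  refine ⟨fun k => e (Fin.cast hlen k), fun a b hab => e.strictMono (by simpa using hab), ?_⟩
  intro k
  rw [← he]
  exact hget k k.isLt (hlen ▸ k.isLt)

namespace WellQuasiOrdered

variable {α : Type*} {r : α → α → Prop}

theorem refl (h : WellQuasiOrdered r) (a : α) : r a a := by
  obtain ⟨_, _, _, h⟩ := h fun _ => a
  exact h

theorem sublistForall₂ [IsTrans α r] (h : WellQuasiOrdered r) :
    WellQuasiOrdered (List.SublistForall₂ r) := by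
  have : IsPreorder α r := { refl := h.refl }
  have hlists := (Set.partiallyWellOrderedOn_univ_iff.mpr h).partiallyWellOrderedOn_sublistForall₂ r
  exact Set.partiallyWellOrderedOn_univ_iff.mp (hlists.mono fun _ _ _ _ => Set.mem_univ _)

theorem listEmb [IsTrans α r] (h : WellQuasiOrdered r) : WellQuasiOrdered (ListEmb r) := by
  intro f
  obtain ⟨i, j, hij, hsub⟩ := h.sublistForall₂ f
  exact ⟨i, j, hij, .of_sublistForall₂ hsub⟩

end WellQuasiOrdered

theorem stmt_7_general {Q : Type*} (le : Q → Q → Prop)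
    (htrans : ∀ x y z, le x y → le y z → le x z)
    (hwqo : ∀ f : ℕ → Q, ∃ i j : ℕ, i < j ∧ le (f i) (f j)) :
    ∀ f : ℕ → List Q, ∃ i j : ℕ, i < j ∧ ListEmb le (f i) (f j) :=
  have : IsTrans Q le := ⟨htrans⟩
  WellQuasiOrdered.listEmb hwqo

/-- Higman's Lemma: If (Q,≤) is WQO then Q*, ordered by
embeddability, is WQO. -/
theorem stmt_7 {Q : Type*} (le : Q → Q → Prop)
    (hrefl : ∀ x, le x x)
    (htrans : ∀ x y z, le x y → le y z → le x z)
    (hwqo : ∀ f : ℕ → Q, ∃ i j : ℕ, i < j ∧ le (f i) (f j)) :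
    ∀ f : ℕ → List Q, ∃ i j : ℕ, i < j ∧ ListEmb le (f i) (f j) :=
  stmt_7_general le htrans hwqo
end

section
/- Every linearization of a well quasiorder is a well-order; conversely, if ≤ is a quasiorder on Q such that every linearization of ≤ (a linear quasiorder extending ≤ whose equivalence extends that of ≤) is a well-order, then ≤ is a well quasiorder. -/
/-- A quasiorder is WQO iff every linearization of it (linear
quasiorder extending ≤) is a well-order (no infinite strictly descending chain). -/
theorem stmt_9 {Q : Type*} (le : Q → Q → Prop)
    (hrefl : ∀ x, le x x)
    (htrans : ∀ x y z, le x y → le y z → le x z) :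
    (∀ f : ℕ → Q, ∃ i j : ℕ, i < j ∧ le (f i) (f j)) ↔
    (∀ le' : Q → Q → Prop,
      (∀ x, le' x x) →
      (∀ x y z, le' x y → le' y z → le' x z) →
      (∀ x y, le' x y ∨ le' y x) →
      (∀ x y, le x y → le' x y) →
      ¬ ∃ f : ℕ → Q, ∀ n, le' (f (n + 1)) (f n) ∧ ¬ le' (f n) (f (n + 1))) := by
  classical
  constructor
  · -- WQO → every linearization is well-ordered
    rintro hwqo le' hrefl' htrans' _htot' hext ⟨f, hf⟩
    have chain : ∀ i k, le' (f (i + k)) (f i) := by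
      intro i k
      induction k with
      | zero => exact hrefl' _
      | succ n ih => exact htrans' _ _ _ (hf (i + n)).1 ih
    obtain ⟨i, j, hij, hle⟩ := hwqo f
    have h1 : le' (f j) (f (i + 1)) := by
      obtain ⟨k, rfl⟩ := Nat.exists_eq_add_of_le hij
      exact chain (i + 1) k
    exact (hf i).2 (htrans' _ _ _ (hext _ _ hle) h1)
  · -- converse
    intro h f
    by_contra hc
    push_neg at hc
    have hbad : ∀ i j : ℕ, i < j → ¬ le (f i) (f j) := fun i j hij => hc i j hij
    letI P : Preorder Q := { le := le, le_refl := hrefl, le_trans := htrans }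
    set tA : Q → Antisymmetrization Q (· ≤ ·) := toAntisymmetrization (· ≤ ·) with htA
    have hle_iff : ∀ a b : Q, tA a ≤ tA b ↔ le a b := fun a b => Iff.rfl
    set g : ℕ → Antisymmetrization Q (· ≤ ·) := fun n => tA (f n) with hg
    have hgbad : ∀ i j : ℕ, g i ≤ g j → j ≤ i := by
      intro i j hij
      by_contra hji
      exact hbad i j (Nat.lt_of_not_le hji) ((hle_iff _ _).1 hij)
    -- the extended relation
    set r : Antisymmetrization Q (· ≤ ·) → Antisymmetrization Q (· ≤ ·) → Prop :=
      fun a b => a ≤ b ∨ ∃ i j : ℕ, i < j ∧ a ≤ g j ∧ g i ≤ b with hr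
    haveI : IsPartialOrder (Antisymmetrization Q (· ≤ ·)) r := by
      refine { refl := fun a => Or.inl le_rfl, trans := ?_, antisymm := ?_ }
      · rintro a b c (hab | ⟨i, j, hij, h1, h2⟩) (hbc | ⟨i', j', hij', h1', h2'⟩)
        · exact Or.inl (hab.trans hbc)
        · exact Or.inr ⟨i', j', hij', hab.trans h1', h2'⟩
        · exact Or.inr ⟨i, j, hij, h1, h2.trans hbc⟩
        · refine Or.inr ⟨i', j, ?_, h1, h2'⟩
          have := hgbad i j' (h2.trans h1')
          omega
      · rintro a b (hab | ⟨i, j, hij, h1, h2⟩) (hba | ⟨i', j', hij', h1', h2'⟩)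
        · exact le_antisymm hab hba
        · exact absurd (hgbad i' j' ((h2'.trans hab).trans h1')) (by omega)
        · exact absurd (hgbad i j ((h2.trans hba).trans h1)) (by omega)
        · have k1 := hgbad i j' (h2.trans h1')
          have k2 := hgbad i' j (h2'.trans h1)
          omega
    obtain ⟨s, hs, hrs⟩ := extend_partialOrder r
    haveI := hs
    -- pull back to Q
    refine h (fun x y => s (tA x) (tA y)) (fun x => refl_of s _)
      (fun x y z => trans_of s) (fun x y => total_of s _ _)
      (fun x y hxy => hrs _ _ (Or.inl ((hle_iff _ _).2 hxy)))
      ⟨f, fun n => ⟨?_, ?_⟩⟩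
    · exact hrs _ _ (Or.inr ⟨n, n + 1, Nat.lt_succ_self n, le_rfl, le_rfl⟩)
    · intro hcon
      have hdesc : s (g (n + 1)) (g n) :=
        hrs _ _ (Or.inr ⟨n, n + 1, Nat.lt_succ_self n, le_rfl, le_rfl⟩)
      have heq : g n = g (n + 1) := antisymm_of s hcon hdesc
      have : g n ≤ g (n + 1) := heq ▸ le_rfl
      exact hbad n (n + 1) (Nat.lt_succ_self n) ((hle_iff _ _).1 this)
end

section
/- Rado's example: there exists a well quasiorder Q such that the set Q^ω of infinite sequences over Q, with the quasiorder f ≤ g iff there is a strictly increasing φ: ℕ → ℕ with f(i) ≤ g(φ(i)) for all i, is not a well quasiorder. Specifically, Q = {(i,j) ∈ ℕ² : i < j} with (i,j) ≤ (i',j') iff (i = i' and j ≤ j') or j < i' works. -/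
/-- Rado's order: pairs (i,j) with i < j. -/
def Rado : Type := {p : ℕ × ℕ // p.1 < p.2}

def radoLe (a b : Rado) : Prop :=
  (a.1.1 = b.1.1 ∧ a.1.2 ≤ b.1.2) ∨ a.1.2 < b.1.1

/-- The quasiorder on infinite sequences over Rado's order. -/
def radoLeOmega (f g : ℕ → Rado) : Prop :=
  ∃ φ : ℕ → ℕ, StrictMono φ ∧ ∀ i, radoLe (f i) (g (φ i))

/-! If the terms of a sequence after `f 0` all start at most at the end of `f 0`, their first
coordinates range over a finite set, and Dickson's lemma for `(Fin N, =) × (ℕ, ≤)` gives a good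
pair with equal first coordinates. Otherwise some later term lies entirely to the right of
`f 0`. In `Rado^ω`, the rows `F n = ((n, n+1), (n, n+2), …)` form a bad sequence: the `j`-th term
`(i, i+j+1)` of row `i < j` has right end `≥ j`, so it is below no pair starting at `j`. -/

theorem exists_radoLe_of_fst_lt (f : ℕ → Rado) (N : ℕ) (hf : ∀ n, (f n).1.1 < N) :
    ∃ m n, m < n ∧ radoLe (f m) (f n) := by
  have hwqo : WellQuasiOrdered fun p q : Fin N × ℕ ↦ p.1 = q.1 ∧ p.2 ≤ q.2 :=
    (Finite.wellQuasiOrdered _).prod wellQuasiOrdered_le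
  obtain ⟨m, n, hmn, hfst, hsnd⟩ := hwqo fun n ↦ (⟨(f n).1.1, hf n⟩, (f n).1.2)
  exact ⟨m, n, hmn, Or.inl ⟨congrArg Fin.val hfst, hsnd⟩⟩

theorem wellQuasiOrdered_radoLe : WellQuasiOrdered radoLe := by
  intro f
  by_cases hright : ∃ n, 0 < n ∧ (f 0).1.2 < (f n).1.1
  · obtain ⟨n, hn, hlt⟩ := hright
    exact ⟨0, n, hn, Or.inr hlt⟩
  · push Not at hright
    obtain ⟨m, n, hmn, hle⟩ := exists_radoLe_of_fst_lt (fun n ↦ f (n + 1)) ((f 0).1.2 + 1)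
      fun n ↦ Nat.lt_succ_of_le (hright (n + 1) n.succ_pos)
    exact ⟨m + 1, n + 1, by omega, hle⟩

theorem not_wellQuasiOrdered_radoLeOmega : ¬ WellQuasiOrdered radoLeOmega := by
  intro h
  obtain ⟨i, j, hij, φ, -, hle⟩ := h fun n k ↦ ⟨(n, n + k + 1), by omega⟩
  have := hle j
  simp only [radoLe] at this
  omega

/-- Rado's example: Rado's order is WQO, but the induced
quasiorder on infinite sequences over it is not WQO. -/
theorem stmt_10 :
    (∀ f : ℕ → Rado, ∃ i j : ℕ, i < j ∧ radoLe (f i) (f j)) ∧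
    ¬ (∀ F : ℕ → (ℕ → Rado), ∃ i j : ℕ, i < j ∧ radoLeOmega (F i) (F j)) :=
  ⟨wellQuasiOrdered_radoLe, not_wellQuasiOrdered_radoLeOmega⟩
end

section
/- Rado's order R = {(i,j) ∈ ℕ² : i < j}, with (i,j) ≤ (i',j') iff (i = i' and j ≤ j') or j < i', is a well quasiorder (it is well-founded and has no infinite antichain). -/
instance : IsPreorder Rado radoLe where
  refl _ := Or.inl ⟨rfl, le_rfl⟩
  trans a b c := by
    rintro (⟨hab, hab'⟩ | hab) (⟨hbc, hbc'⟩ | hbc)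
    · exact Or.inl ⟨hab.trans hbc, hab'.trans hbc'⟩
    · exact Or.inr (hab'.trans_lt hbc)
    · exact Or.inr (hbc ▸ hab)
    · exact Or.inr ((hab.trans b.2).trans hbc)

theorem exists_lt_fst_eq_snd_le_of_fst_lt (f : ℕ → ℕ × ℕ) {B : ℕ} (hB : ∀ n, (f n).1 < B) :
    ∃ m n, m < n ∧ (f m).1 = (f n).1 ∧ (f m).2 ≤ (f n).2 := by
  obtain ⟨m, n, hmn, hfst, hsnd⟩ :=
    (Finite.wellQuasiOrdered (α := Fin B) (· = ·)).prod wellQuasiOrdered_le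
      fun n ↦ ((⟨(f n).1, hB n⟩ : Fin B), (f n).2)
  exact ⟨m, n, hmn, congrArg Fin.val hfst, hsnd⟩

/-- Rado's order is a WQO: it is well-founded, has no infinite
antichain, and every infinite sequence is good. -/
theorem stmt_11 :
    (∀ f : ℕ → Rado, ∃ i j : ℕ, i < j ∧ radoLe (f i) (f j)) ∧
    (¬ ∃ f : ℕ → Rado, ∀ n, radoLe (f (n + 1)) (f n) ∧ ¬ radoLe (f n) (f (n + 1))) ∧
    (¬ ∃ f : ℕ → Rado, ∀ i j : ℕ, i ≠ j → ¬ radoLe (f i) (f j)) := by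
  refine ⟨wellQuasiOrdered_radoLe, ?_, ?_⟩
  · rintro ⟨f, hf⟩
    exact (wellFounded_iff_isEmpty_descending_chain.1 wellQuasiOrdered_radoLe.wellFounded).elim
      ⟨f, hf⟩
  · rintro ⟨f, hf⟩
    obtain ⟨i, j, hij, hle⟩ := wellQuasiOrdered_radoLe f
    exact hf i j hij.ne hle
end
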